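/- Let F be a field and b₁, b₂, b₃, b₄ ∈ F. Consider the reduced deformed D₄ map φ̂(y₁,y₂) = (y₁', y₂') with y₁' = ((b₁+y₁)y₂ + b₂)/y₁ and y₂' = ((b₄+y₂)y₁ + b₁y₂ + b₂)·((b₃+y₂)y₁ + b₁y₂ + b₂)/(y₂·y₁²·(b₁+y₁)). Suppose the parameters satisfy one of the three conditions: (I) b₂ = b₄ = b₁b₃, (II) b₁ = b₂ = b₃b₄, or (III) b₂ = b₃ = b₁b₄. Then for all nonzero y₁, y₂ with b₁ + y₁ ≠ 0 and with nonzero image coordinates, the rational function K̃₁(y₁,y₂) = y₁ + y₂ + y₁/y₂ + (b₁+1)·y₂/y₁ + (b₃+b₄+1)/y₂ + (b₁+b₂+b₃+b₄+1)/y₁ + b₁·y₂/y₁² + (b₃b₄+b₃+b₄)/(y₁y₂) + 2b₂/y₁² + b₃b₄/(y₁²y₂) satisfies K̃₁(φ̂(y₁,y₂)) = K̃₁(y₁,y₂); hence φ̂ is a Liouville integrable map of the plane. -/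

import Mathlib

/-- The first integral `K̃₁` of the reduced deformed D₄ map. -/
noncomputable def KtilD4 {F : Type*} [Field F] (b₁ b₂ b₃ b₄ y₁ y₂ : F) : F :=
  y₁ + y₂ + y₁ / y₂ + (b₁ + 1) * y₂ / y₁ + (b₃ + b₄ + 1) / y₂ +
    (b₁ + b₂ + b₃ + b₄ + 1) / y₁ + b₁ * y₂ / y₁ ^ 2 +
    (b₃ * b₄ + b₃ + b₄) / (y₁ * y₂) + 2 * b₂ / y₁ ^ 2 + b₃ * b₄ / (y₁ ^ 2 * y₂)

/-!
With `w₀ = y₁`, `w₁ = y₁'` (so `w₀ w₁ = (b₁ + w₀) y₂ + b₂`) and `p = (b₁ + x) y`,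
`K̃₁(x, y) = x + (b₁+b₂+b₃+b₄+1)/x + 2b₂/x² + (x+1)(p + (x+b₁)(x+b₃)(x+b₄)/p)/x²`,
which is symmetric under `p ↦ (x+b₁)(x+b₃)(x+b₄)/p`. The second mutation is exactly this
exchange, so `K̃₁(y₁, y₂) = KtilD4Pair w₀ w₁` and `K̃₁(y₁', y₂') = KtilD4Pair w₁ w₀`, and
invariance reduces to the symmetry of `KtilD4Pair`.

Each of the three parameter conditions says that `(a+b₁)(a+b₃)(a+b₄) = (a+b₂)(a² + γa + b₂)`,
so `(a+1)(a+b₁)(a+b₃)(a+b₄)/a²` is a polynomial in `σ(a) = a + b₂/a`. Since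
`σ(a) - σ(c) = (a - c)(ac - b₂)/(ac)`, the pole along `ac = b₂` cancels in the difference
`KtilD4Pair a c - KtilD4Pair c a`, and what remains vanishes because `γ = b₁ + b₃ + b₄ - b₂`.
-/

section

variable {F : Type*} [Field F] (b₁ b₂ b₃ b₄ : F)

noncomputable def KtilD4Pair (a c : F) : F :=
  a + (b₁ + b₂ + b₃ + b₄ + 1) / a + 2 * b₂ / a ^ 2 +
    (a + 1) * (a * c - b₂ + (a + b₁) * (a + b₃) * (a + b₄) / (a * c - b₂)) / a ^ 2

variable {b₁ b₂ b₃ b₄}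

theorem KtilD4_eq_KtilD4Pair_of_mul_eq {x y c : F} (hx : x ≠ 0) (hy : y ≠ 0)
    (hs : b₁ + x ≠ 0) (h : x * c = (b₁ + x) * y + b₂) :
    KtilD4 b₁ b₂ b₃ b₄ x y = KtilD4Pair b₁ b₂ b₃ b₄ x c := by
  have hp : x * c - b₂ = (b₁ + x) * y := by rw [h]; ring
  rw [KtilD4Pair, hp, KtilD4]
  field_simp
  ring

theorem KtilD4_eq_KtilD4Pair_of_mul_sub_eq {x y a : F} (hx : x ≠ 0) (hy : y ≠ 0)
    (ha : x * a - b₂ ≠ 0) (h : y * (x * a - b₂) = (x + b₃) * (x + b₄)) :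
    KtilD4 b₁ b₂ b₃ b₄ x y = KtilD4Pair b₁ b₂ b₃ b₄ x a := by
  obtain ⟨h₃, h₄⟩ := mul_ne_zero_iff.mp (h ▸ mul_ne_zero hy ha)
  have hq : x * a - b₂ = (x + b₃) * (x + b₄) / y := by rw [← h]; field_simp
  rw [KtilD4Pair, hq, KtilD4]
  field_simp
  ring

theorem cubic_factor_of_D4_condition
    (hcond : (b₂ = b₄ ∧ b₂ = b₁ * b₃) ∨ (b₁ = b₂ ∧ b₁ = b₃ * b₄) ∨ (b₂ = b₃ ∧ b₂ = b₁ * b₄))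
    (a : F) :
    (a + b₁) * (a + b₃) * (a + b₄) = (a + b₂) * (a ^ 2 + (b₁ + b₃ + b₄ - b₂) * a + b₂) := by
  obtain ⟨rfl, rfl⟩ | ⟨rfl, rfl⟩ | ⟨rfl, rfl⟩ := hcond <;> ring

theorem KtilD4Pair_comm
    (hcond : (b₂ = b₄ ∧ b₂ = b₁ * b₃) ∨ (b₁ = b₂ ∧ b₁ = b₃ * b₄) ∨ (b₂ = b₃ ∧ b₂ = b₁ * b₄))
    {a c : F} (ha : a ≠ 0) (hc : c ≠ 0) (hac : a * c - b₂ ≠ 0) :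
    KtilD4Pair b₁ b₂ b₃ b₄ a c = KtilD4Pair b₁ b₂ b₃ b₄ c a := by
  have hca : c * a - b₂ ≠ 0 := by rwa [mul_comm]
  rw [KtilD4Pair, KtilD4Pair, cubic_factor_of_D4_condition hcond a,
    cubic_factor_of_D4_condition hcond c]
  field_simp
  ring

end

/-- under any of the three parameter conditions
(I) `b₂ = b₄ = b₁b₃`, (II) `b₁ = b₂ = b₃b₄`, (III) `b₂ = b₃ = b₁b₄`, the
rational function `K̃₁` is invariant under the reduced deformed D₄ map
`φ̂(y₁,y₂) = (((b₁+y₁)y₂+b₂)/y₁, ((b₄+y₂)y₁+b₁y₂+b₂)((b₃+y₂)y₁+b₁y₂+b₂)/(y₂y₁²(b₁+y₁)))`. -/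
theorem deformed_D4_first_integral {F : Type*} [Field F] (b₁ b₂ b₃ b₄ y₁ y₂ : F)
    (hcond : (b₂ = b₄ ∧ b₂ = b₁ * b₃) ∨ (b₁ = b₂ ∧ b₁ = b₃ * b₄) ∨
      (b₂ = b₃ ∧ b₂ = b₁ * b₄))
    (h₁ : y₁ ≠ 0) (h₂ : y₂ ≠ 0) (hb : b₁ + y₁ ≠ 0)
    (him₁ : ((b₁ + y₁) * y₂ + b₂) / y₁ ≠ 0)
    (him₂ : ((b₄ + y₂) * y₁ + b₁ * y₂ + b₂) * ((b₃ + y₂) * y₁ + b₁ * y₂ + b₂) /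
      (y₂ * y₁ ^ 2 * (b₁ + y₁)) ≠ 0) :
    KtilD4 b₁ b₂ b₃ b₄ (((b₁ + y₁) * y₂ + b₂) / y₁)
        (((b₄ + y₂) * y₁ + b₁ * y₂ + b₂) * ((b₃ + y₂) * y₁ + b₁ * y₂ + b₂) /
          (y₂ * y₁ ^ 2 * (b₁ + y₁))) =
      KtilD4 b₁ b₂ b₃ b₄ y₁ y₂ := by
  set u := ((b₁ + y₁) * y₂ + b₂) / y₁
  have hu : y₁ * u = (b₁ + y₁) * y₂ + b₂ := mul_div_cancel₀ _ h₁
  have hp : u * y₁ - b₂ = (b₁ + y₁) * y₂ := by rw [mul_comm, hu]; ring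
  have hp₀ : u * y₁ - b₂ ≠ 0 := hp ▸ mul_ne_zero hb h₂
  set v := ((b₄ + y₂) * y₁ + b₁ * y₂ + b₂) * ((b₃ + y₂) * y₁ + b₁ * y₂ + b₂) /
      (y₂ * y₁ ^ 2 * (b₁ + y₁)) with hv_def
  have hfactor (b : F) : (b + y₂) * y₁ + b₁ * y₂ + b₂ = y₁ * (u + b) := by
    linear_combination -hu
  have hv : v * (u * y₁ - b₂) = (u + b₃) * (u + b₄) := by
    rw [hv_def, hfactor, hfactor, hp]
    field_simp
  rw [KtilD4_eq_KtilD4Pair_of_mul_sub_eq him₁ him₂ hp₀ hv,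
    KtilD4_eq_KtilD4Pair_of_mul_eq h₁ h₂ hb hu, KtilD4Pair_comm hcond him₁ h₁ hp₀]
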